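/- In the two-point example, the time-inhomogeneous chain with deterministic kernel sequence P_{θ_n} (where P_θ(0,{1}) = P_θ(1,{0}) = θ), with θ_n ∈ (0,1/2], θ_n → 0, and Σ_n θ_n = ∞, is ergodic: for any starting point x, the law of X_n converges in total variation to π = (1/2,1/2). Explicitly, ||L(X_n | X_0 = x) − π|| = (1/2)·∏_{k=1}^{n}(1 − 2θ_k) → 0, since Σθ_k = ∞ forces the product to 0. Moreover this adaptive scheme satisfies Diminishing Adaptation (since θ_n → 0 implies sup_x ||P_{θ_{n+1}}(x,·) − P_{θ_n}(x,·)|| = |θ_{n+1} − θ_n| → 0) but fails Containment (since M_ε(x, θ_n) → ∞), hence by Theorem 3.3 it is in AdapFail despite being ergodic. -/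

import Mathlib

open MeasureTheory ProbabilityTheory Filter
open scoped ENNReal NNReal

noncomputable def tvDist {X : Type*} [MeasurableSpace X] (μ ν : Measure X) : ℝ :=
  ⨆ A : {s : Set X // MeasurableSet s}, |(μ A.1).toReal - (ν A.1).toReal|

noncomputable def kiter {X : Type*} [MeasurableSpace X] (P : Kernel X X) : ℕ → Kernel X X
  | 0 => Kernel.id
  | n+1 => P ∘ₖ kiter P n

noncomputable def Meps {X : Type*} [MeasurableSpace X] (P : Kernel X X) (π : Measure X)
    (ε : ℝ) (x : X) : ℕ∞ :=
  sInf ((↑) '' {n : ℕ | 1 ≤ n ∧ tvDist ((kiter P n) x) π ≤ ε})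

/-- The two-point kernel `P_θ` on `{0,1}` (modelled as `Bool`): flip with probability `θ`,
stay with probability `1 − θ`. -/
noncomputable def twoPtKernel (θ : ℝ) : Kernel Bool Bool :=
  ⟨fun x => ENNReal.ofReal (1 - θ) • Measure.dirac x + ENNReal.ofReal θ • Measure.dirac (!x),
   measurable_of_countable _⟩

/-- The uniform target `π = (1/2, 1/2)` on the two-point space. -/
noncomputable def twoPtUnif : Measure Bool :=
  (1 / 2 : ℝ≥0∞) • Measure.dirac false + (1 / 2 : ℝ≥0∞) • Measure.dirac true

/-- The inhomogeneous product `P_{θ_{m+1}} P_{θ_{m+2}} ⋯ P_{θ_{m+n}}`: the law of `n` steps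
of the time-inhomogeneous chain restarted at time `m`. -/
noncomputable def inhomFrom (θseq : ℕ → ℝ) (m : ℕ) : ℕ → Kernel Bool Bool
  | 0 => Kernel.id
  | n + 1 => twoPtKernel (θseq (m + n + 1)) ∘ₖ inhomFrom θseq m n

/-- `ε` convergence time of the inhomogeneous (adaptive) scheme restarted at time `m`
from state `x`. -/
noncomputable def MAinhom (θseq : ℕ → ℝ) (ε : ℝ) (x : Bool) (m : ℕ) : ℕ∞ :=
  sInf ((↑) '' {n : ℕ | 1 ≤ n ∧ tvDist ((inhomFrom θseq m n) x) twoPtUnif ≤ ε})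

/-! Each step `P_θ` multiplies the deviation `μ{false} - 1/2` by `1 - 2θ`, and on two points the
total variation distance to `π` is the absolute value of this deviation; hence after `n` steps it
is `(1/2) ∏ (1 - 2θ_k) ≤ (1/2) exp (-2 Σ θ_k) → 0`. Conversely, once all later `θ_k` are at most
some `c > 0` with `(1 - 2c)^M > 2ε`, no chain run for at most `M` steps is `ε`-close to `π`; since
`θ_n → 0` this eventually happens for every `M`, which breaks Containment and gives AdapFail. -/

lemma Bool.measureReal_true {μ : Measure Bool} [IsProbabilityMeasure μ] :
    μ.real {true} = 1 - μ.real {false} := by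
  rw [← probReal_compl_eq_one_sub (measurableSet_singleton false)]
  congr 1
  ext b
  cases b <;> simp

lemma tvDist_eq_abs_measureReal_false_sub {μ ν : Measure Bool} [IsProbabilityMeasure μ]
    [IsProbabilityMeasure ν] :
    tvDist μ ν = |μ.real {false} - ν.real {false}| := by
  have hle (A : Set Bool) : |μ.real A - ν.real A| ≤ |μ.real {false} - ν.real {false}| := by
    by_cases hf : false ∈ A <;> by_cases ht : true ∈ A
    · rw [show A = Set.univ by ext b; cases b <;> simp [hf, ht], probReal_univ, probReal_univ,
        sub_self, abs_zero]
      exact abs_nonneg _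
    · rw [show A = {false} by ext b; cases b <;> simp [hf, ht]]
    · rw [show A = {true} by ext b; cases b <;> simp [hf, ht], Bool.measureReal_true,
        Bool.measureReal_true, ← abs_neg, neg_sub, sub_sub_sub_cancel_left]
    · simp [show A = ∅ by ext b; cases b <;> simp [hf, ht]]
  refine le_antisymm (ciSup_le fun A => hle A.1) ?_
  exact le_ciSup_of_le ⟨_, Set.forall_mem_range.2 fun A => hle A.1⟩
    ⟨{false}, measurableSet_singleton false⟩ le_rfl

lemma isMarkovKernel_twoPtKernel {θ : ℝ} (h0 : 0 ≤ θ) (h1 : θ ≤ 1) :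
    IsMarkovKernel (twoPtKernel θ) := by
  refine ⟨fun x => ⟨?_⟩⟩
  change (ENNReal.ofReal (1 - θ) • Measure.dirac x + ENNReal.ofReal θ • Measure.dirac (!x))
    Set.univ = 1
  simp [← ENNReal.ofReal_add (sub_nonneg.2 h1) h0]

lemma twoPtKernel_apply_real_false {θ : ℝ} (h0 : 0 ≤ θ) (h1 : θ ≤ 1) (x : Bool) :
    ((twoPtKernel θ) x).real {false} = if x then θ else 1 - θ := by
  change (ENNReal.ofReal (1 - θ) • Measure.dirac x + ENNReal.ofReal θ • Measure.dirac (!x)).real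
    {false} = _
  cases x <;> simp [measureReal_def, h0, h1]

lemma tvDist_twoPtUnif_eq_abs {μ : Measure Bool} [IsProbabilityMeasure μ] :
    tvDist μ twoPtUnif = |μ.real {false} - 1 / 2| := by
  have : IsProbabilityMeasure twoPtUnif := ⟨by simp [twoPtUnif, ENNReal.inv_two_add_inv_two]⟩
  rw [tvDist_eq_abs_measureReal_false_sub]
  simp [twoPtUnif, measureReal_def]

lemma bind_twoPtKernel_real_false_sub_half {μ : Measure Bool} [IsProbabilityMeasure μ] {θ : ℝ}
    (h0 : 0 ≤ θ) (h1 : θ ≤ 1) :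
    (μ.bind (twoPtKernel θ)).real {false} - 1 / 2 = (1 - 2 * θ) * (μ.real {false} - 1 / 2) := by
  have := isMarkovKernel_twoPtKernel h0 h1
  have hbind : (μ.bind (twoPtKernel θ)).real {false}
      = ((twoPtKernel θ) true).real {false} * μ.real {true}
        + ((twoPtKernel θ) false).real {false} * μ.real {false} := by
    simp only [measureReal_def, Measure.bind_apply (measurableSet_singleton false)
      (Kernel.measurable _).aemeasurable, lintegral_fintype, Fintype.sum_bool]
    rw [ENNReal.toReal_add (by finiteness) (by finiteness), ENNReal.toReal_mul,
      ENNReal.toReal_mul]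
  rw [hbind, twoPtKernel_apply_real_false h0 h1, twoPtKernel_apply_real_false h0 h1,
    Bool.measureReal_true]
  simp only [if_true, Bool.false_eq_true, if_false]
  ring

lemma isMarkovKernel_inhomFrom {θseq : ℕ → ℝ} (hθ : ∀ k, θseq k ∈ Set.Icc 0 1) (m : ℕ) :
    ∀ n, IsMarkovKernel (inhomFrom θseq m n)
  | 0 => inferInstanceAs (IsMarkovKernel Kernel.id)
  | n + 1 =>
    have := isMarkovKernel_inhomFrom hθ m n
    have := isMarkovKernel_twoPtKernel (hθ (m + n + 1)).1 (hθ (m + n + 1)).2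
    inferInstanceAs (IsMarkovKernel (_ ∘ₖ _))

lemma inhomFrom_apply_real_false_sub_half {θseq : ℕ → ℝ} (hθ : ∀ k, θseq k ∈ Set.Icc 0 1)
    (m n : ℕ) (x : Bool) :
    ((inhomFrom θseq m n) x).real {false} - 1 / 2
      = (∏ k ∈ Finset.range n, (1 - 2 * θseq (m + k + 1)))
        * ((Measure.dirac x).real {false} - 1 / 2) := by
  induction n with
  | zero => simp [inhomFrom, Kernel.id_apply]
  | succ n ih =>
    have := isMarkovKernel_inhomFrom hθ m n
    rw [inhomFrom, Kernel.comp_apply, bind_twoPtKernel_real_false_sub_half (hθ _).1 (hθ _).2,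
      ih, Finset.prod_range_succ]
    ring

lemma tvDist_inhomFrom_twoPtUnif {θseq : ℕ → ℝ} (hθ : ∀ k, θseq k ∈ Set.Icc 0 1)
    (m n : ℕ) (x : Bool) :
    tvDist ((inhomFrom θseq m n) x) twoPtUnif
      = 1 / 2 * ∏ k ∈ Finset.range n, |1 - 2 * θseq (m + k + 1)| := by
  have := isMarkovKernel_inhomFrom hθ m n
  rw [tvDist_twoPtUnif_eq_abs, inhomFrom_apply_real_false_sub_half hθ, abs_mul, Finset.abs_prod]
  cases x <;> norm_num [measureReal_def, mul_comm]

lemma kiter_twoPtKernel_eq_inhomFrom (θ : ℝ) (m : ℕ) :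
    ∀ n, kiter (twoPtKernel θ) n = inhomFrom (fun _ => θ) m n
  | 0 => rfl
  | n + 1 => by rw [kiter, inhomFrom, kiter_twoPtKernel_eq_inhomFrom θ m n]

lemma Meps_twoPtKernel_eq_MAinhom (θ ε : ℝ) (x : Bool) (m : ℕ) :
    Meps (twoPtKernel θ) twoPtUnif ε x = MAinhom (fun _ => θ) ε x m := by
  simp only [Meps, MAinhom, kiter_twoPtKernel_eq_inhomFrom θ m]

lemma tvDist_twoPtKernel_apply {θ θ' : ℝ} (hθ : θ ∈ Set.Icc 0 1) (hθ' : θ' ∈ Set.Icc 0 1)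
    (x : Bool) : tvDist ((twoPtKernel θ) x) ((twoPtKernel θ') x) = |θ - θ'| := by
  have := isMarkovKernel_twoPtKernel hθ.1 hθ.2
  have := isMarkovKernel_twoPtKernel hθ'.1 hθ'.2
  rw [tvDist_eq_abs_measureReal_false_sub, twoPtKernel_apply_real_false hθ.1 hθ.2,
    twoPtKernel_apply_real_false hθ'.1 hθ'.2]
  cases x
  · rw [if_neg Bool.false_ne_true, if_neg Bool.false_ne_true, sub_sub_sub_cancel_left, abs_sub_comm]
  · rfl

lemma Finset.prod_range_add_one_eq_prod_Icc {M : Type*} [CommMonoid M] (f : ℕ → M) (n : ℕ) :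
    ∏ k ∈ Finset.range n, f (k + 1) = ∏ k ∈ Finset.Icc 1 n, f k := by
  rw [Finset.range_eq_Ico, Finset.prod_Ico_add', Finset.Ico_add_one_right_eq_Icc, zero_add]

lemma tendsto_prod_range_one_sub_of_tendsto_sum {a : ℕ → ℝ}
    (h1 : ∀ k, a k ≤ 1) (h : Tendsto (fun n => ∑ k ∈ Finset.range n, a k) atTop atTop) :
    Tendsto (fun n => ∏ k ∈ Finset.range n, (1 - a k)) atTop (nhds 0) := by
  refine squeeze_zero (fun n => Finset.prod_nonneg fun k _ => sub_nonneg.2 (h1 k)) (fun n => ?_)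
    (Real.tendsto_exp_atBot.comp (tendsto_neg_atTop_atBot.comp h))
  calc ∏ k ∈ Finset.range n, (1 - a k)
      ≤ ∏ k ∈ Finset.range n, Real.exp (-a k) :=
        Finset.prod_le_prod (fun k _ => sub_nonneg.2 (h1 k)) fun k _ => Real.one_sub_le_exp_neg _
    _ = Real.exp (-∑ k ∈ Finset.range n, a k) := by
        rw [← Real.exp_sum, Finset.sum_neg_distrib]

lemma natCast_lt_sInf_image_natCast {s : Set ℕ} {N : ℕ} (h : ∀ n ∈ s, N < n) :
    (N : ℕ∞) < sInf ((↑) '' s) := by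
  refine lt_of_lt_of_le (b := ((N + 1 : ℕ) : ℕ∞)) (by exact_mod_cast N.lt_succ_self) ?_
  refine le_sInf ?_
  rintro _ ⟨n, hn, rfl⟩
  exact_mod_cast h n hn

lemma natCast_lt_MAinhom {θseq : ℕ → ℝ} (hθ : ∀ k, θseq k ∈ Set.Icc 0 1) {c ε : ℝ} {m M : ℕ}
    (hc : ∀ k, m < k → θseq k ≤ c) (hc2 : c ≤ 1 / 2) (hε : 2 * ε < (1 - 2 * c) ^ M)
    (x : Bool) : (M : ℕ∞) < MAinhom θseq ε x m := by
  refine natCast_lt_sInf_image_natCast ?_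
  rintro n ⟨-, hn⟩
  by_contra! hnM
  have hc0 : 0 ≤ c := (hθ (m + 1)).1.trans (hc _ m.lt_succ_self)
  have hprod : (1 - 2 * c) ^ M ≤ ∏ k ∈ Finset.range n, |1 - 2 * θseq (m + k + 1)| :=
    calc (1 - 2 * c) ^ M ≤ (1 - 2 * c) ^ n := pow_le_pow_of_le_one (by linarith) (by linarith) hnM
      _ = ∏ _k ∈ Finset.range n, (1 - 2 * c) := by rw [Finset.prod_const, Finset.card_range]
      _ ≤ ∏ k ∈ Finset.range n, |1 - 2 * θseq (m + k + 1)| :=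
        Finset.prod_le_prod (fun _ _ => by linarith) fun k _ =>
          le_abs.2 (Or.inl (by linarith [hc (m + k + 1) (by omega)]))
  rw [tvDist_inhomFrom_twoPtUnif hθ] at hn
  linarith

lemma exists_pos_lt_one_sub_two_mul_pow {ε : ℝ} (hε : 2 * ε < 1) (M : ℕ) :
    ∃ c : ℝ, 0 < c ∧ c ≤ 1 / 2 ∧ 2 * ε < (1 - 2 * c) ^ M := by
  have hlim : Tendsto (fun c : ℝ => (1 - 2 * c) ^ M) (nhdsWithin 0 (Set.Ioi 0)) (nhds 1) := by
    have hcont : Continuous fun c : ℝ => (1 - 2 * c) ^ M := by fun_prop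
    simpa using (hcont.tendsto 0).mono_left nhdsWithin_le_nhds
  obtain ⟨c, hcε, hc2, hc0⟩ := ((hlim.eventually (eventually_gt_nhds hε)).and
    (((eventually_le_nhds (by norm_num : (0 : ℝ) < 1 / 2)).filter_mono nhdsWithin_le_nhds).and
      self_mem_nhdsWithin)).exists
  exact ⟨c, hc0, hc2, hcε⟩

lemma eventually_natCast_lt_MAinhom {θseq : ℕ → ℝ} (hθ : ∀ k, θseq k ∈ Set.Icc 0 1)
    (hθ0 : Tendsto θseq atTop (nhds 0)) {ε : ℝ} (hε : 2 * ε < 1) (M : ℕ) :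
    ∀ᶠ m in atTop, ∀ x, (M : ℕ∞) < MAinhom θseq ε x m := by
  obtain ⟨c, hc0, hc2, hcε⟩ := exists_pos_lt_one_sub_two_mul_pow hε M
  obtain ⟨K, hK⟩ := eventually_atTop.1 (hθ0.eventually (eventually_le_nhds hc0))
  filter_upwards [eventually_ge_atTop K] with m hm x
  exact natCast_lt_MAinhom hθ (fun k hk => hK k (by omega)) hc2 hcε x

lemma eventually_natCast_lt_Meps_twoPtKernel {θseq : ℕ → ℝ} (hθ : ∀ k, θseq k ∈ Set.Icc 0 1)
    (hθ0 : Tendsto θseq atTop (nhds 0)) {ε : ℝ} (hε : 2 * ε < 1) (M : ℕ) :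
    ∀ᶠ n in atTop, ∀ x, (M : ℕ∞) < Meps (twoPtKernel (θseq n)) twoPtUnif ε x := by
  obtain ⟨c, hc0, hc2, hcε⟩ := exists_pos_lt_one_sub_two_mul_pow hε M
  filter_upwards [hθ0.eventually (eventually_le_nhds hc0)] with n hn x
  rw [Meps_twoPtKernel_eq_MAinhom _ _ _ 0]
  exact natCast_lt_MAinhom (fun _ => hθ n) (fun _ _ => hn) hc2 hcε x

/-- in the two-point example with deterministic parameters `θ_n ∈ (0,1/2]`,
`θ_n → 0`, `Σ θ_n = ∞`: the inhomogeneous chain is ergodic with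
`‖L(X_n | X_0 = x) − π‖ = (1/2)·∏_{k=1}^n (1 − 2θ_k) → 0`; Diminishing Adaptation holds;
Containment fails (`M_ε(x, θ_n) → ∞` deterministically); and the scheme is in AdapFail. -/
theorem twoPt_inhomogeneous_ergodic_DA_noContainment_AdapFail
    (θseq : ℕ → ℝ) (hθ : ∀ n, θseq n ∈ Set.Ioc (0 : ℝ) (1 / 2))
    (hθ0 : Tendsto θseq atTop (nhds 0))
    (hdiv : Tendsto (fun n => ∑ k ∈ Finset.range n, θseq k) atTop atTop) :
    -- explicit TV formula and ergodicity
    (∀ (x : Bool) (n : ℕ), tvDist ((inhomFrom θseq 0 n) x) twoPtUnif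
        = (1 / 2) * ∏ k ∈ Finset.Icc 1 n, (1 - 2 * θseq k)) ∧
    (∀ x : Bool,
      Tendsto (fun n => tvDist ((inhomFrom θseq 0 n) x) twoPtUnif) atTop (nhds 0)) ∧
    -- Diminishing Adaptation
    Tendsto (fun n => ⨆ x : Bool,
        tvDist ((twoPtKernel (θseq (n + 1))) x) ((twoPtKernel (θseq n)) x))
      atTop (nhds 0) ∧
    -- Containment fails: the frozen convergence times blow up deterministically
    (∀ ε : ℝ, 0 < ε → ε < 1 / 2 → ∀ (x : Bool) (N : ℕ),
      ∀ᶠ n in atTop, (N : ℕ∞) < Meps (twoPtKernel (θseq n)) twoPtUnif ε x) ∧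
    -- hence (Theorem 3.3) the scheme is in AdapFail, despite being ergodic
    (∀ ε : ℝ, 0 < ε → ε < 1 / 2 → ∀ xstar : Bool, ∃ δ : ℝ≥0∞, 0 < δ ∧
      ∀ M : ℕ, δ ≤ Filter.atTop.limsup (fun n =>
        (inhomFrom θseq 0 n) xstar {x | (M : ℕ∞) < MAinhom θseq ε x n})) := by
  have hθ' (k : ℕ) : θseq k ∈ Set.Icc 0 1 := ⟨(hθ k).1.le, (hθ k).2.trans (by norm_num)⟩
  have formula (x : Bool) (n : ℕ) : tvDist ((inhomFrom θseq 0 n) x) twoPtUnif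
      = (1 / 2) * ∏ k ∈ Finset.Icc 1 n, (1 - 2 * θseq k) := by
    rw [tvDist_inhomFrom_twoPtUnif hθ', ← Finset.prod_range_add_one_eq_prod_Icc]
    refine congrArg _ (Finset.prod_congr rfl fun k _ => ?_)
    rw [zero_add, abs_of_nonneg (by linarith [(hθ (k + 1)).2])]
  have hdiv' : Tendsto (fun n => ∑ k ∈ Finset.range n, 2 * θseq (k + 1)) atTop atTop := by
    refine ((tendsto_atTop_add_const_right atTop (-θseq 0)
      (hdiv.comp (tendsto_add_atTop_nat 1))).const_mul_atTop two_pos).congr fun n => ?_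
    simp [Finset.sum_range_succ', Finset.mul_sum]
  refine ⟨formula, fun x => ?_, ?_, fun ε _ hε x N => ?_,
    fun ε _ hε xstar => ⟨1, one_pos, fun M => ?_⟩⟩
  · simp_rw [formula, ← Finset.prod_range_add_one_eq_prod_Icc]
    simpa using (tendsto_prod_range_one_sub_of_tendsto_sum
      (fun k => by linarith [(hθ (k + 1)).2]) hdiv').const_mul (1 / 2 : ℝ)
  · simp_rw [tvDist_twoPtKernel_apply (hθ' _) (hθ' _), ciSup_const]
    simpa using ((hθ0.comp (tendsto_add_atTop_nat 1)).sub hθ0).abs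
  · exact (eventually_natCast_lt_Meps_twoPtKernel hθ' hθ0 (by linarith) N).mono fun n hn => hn x
  · have hone : ∀ᶠ n in atTop,
        (inhomFrom θseq 0 n) xstar {x | (M : ℕ∞) < MAinhom θseq ε x n} = 1 :=
      (eventually_natCast_lt_MAinhom hθ' hθ0 (by linarith) M).mono fun n hn => by
        have := isMarkovKernel_inhomFrom hθ' 0 n
        simp only [hn, Set.ofPred_true, measure_univ]
    rw [limsup_congr hone, limsup_const]
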